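/- Let q be a self-join-free Boolean conjunctive query, x a variable of q, and a a constant. If the attack graph of q is acyclic, then the attack graph of q[x→a] (the query obtained by substituting a for all occurrences of x) is acyclic. -/

import Mathlib

/-- A fact `R(a₁,…,aₙ)`: relation name, primary-key values, non-key values. -/
structure DBFact where
  rel : ℕ
  key : List ℕ
  rest : List ℕ
deriving DecidableEq

/-- Two facts are key-equal if they have the same relation name and primary-key value. -/
def keyEq (A B : DBFact) : Prop := A.rel = B.rel ∧ A.key = B.key

instance (A B : DBFact) : Decidable (keyEq A B) :=
  inferInstanceAs (Decidable (_ ∧ _))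

/-- A set of facts is consistent if it contains no two distinct key-equal facts. -/
def Consistent (s : Finset DBFact) : Prop := ∀ A ∈ s, ∀ B ∈ s, keyEq A B → A = B

/-- A repair of `db` is a maximal (w.r.t. ⊆) consistent subset of `db`. -/
def Repair (db r : Finset DBFact) : Prop :=
  r ⊆ db ∧ Consistent r ∧ ∀ r', r' ⊆ db → Consistent r' → r ⊆ r' → r = r'

/-- A term is a variable (inl) or a constant (inr). -/
abbrev Term := ℕ ⊕ ℕ

/-- An atom `R(t₁,…,tₙ)` with key positions and non-key positions. -/
structure Atom where
  rel : ℕ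
  key : List Term
  rest : List Term
deriving DecidableEq

def termVars (l : List Term) : Finset ℕ := (l.filterMap fun t => t.getLeft?).toFinset

/-- Variables at primary-key positions of an atom. -/
def keyVars (F : Atom) : Finset ℕ := termVars F.key

/-- All variables of an atom. -/
def atomVars (F : Atom) : Finset ℕ := termVars F.key ∪ termVars F.rest

/-- A query (finite set of atoms) is self-join-free: no relation name occurs twice. -/
def SJF (q : Finset Atom) : Prop := ∀ F ∈ q, ∀ G ∈ q, F.rel = G.rel → F = G

/-- Apply a valuation (total map from variables to constants) to an atom, yielding a fact. -/
def applyVal (θ : ℕ → ℕ) (F : Atom) : DBFact :=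
  ⟨F.rel, F.key.map (Sum.elim θ id), F.rest.map (Sum.elim θ id)⟩

/-- Semantic implication of a functional dependency `X → Y` by a set of FDs
(two-tuple semantics, which is equivalent to the standard one for FDs). -/
def FDImplies (fds : Set (Set ℕ × Set ℕ)) (X Y : Set ℕ) : Prop :=
  ∀ θ μ : ℕ → ℕ,
    (∀ p ∈ fds, (∀ v ∈ p.1, θ v = μ v) → ∀ v ∈ p.2, θ v = μ v) →
    (∀ v ∈ X, θ v = μ v) → ∀ v ∈ Y, θ v = μ v

/-- `FD(q) = { key(F) → vars(F) : F ∈ q }`. -/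
def FDs (q : Finset Atom) : Set (Set ℕ × Set ℕ) :=
  {p | ∃ F ∈ q, p = ((keyVars F : Set ℕ), (atomVars F : Set ℕ))}

/-- `F⁺ = { x : FD(q \ {F}) ⊨ key(F) → x }`. -/
def plus (q : Finset Atom) (F : Atom) : Set ℕ :=
  {x | FDImplies (FDs (q.erase F)) (keyVars F : Set ℕ) {x}}

/-- One step of a witness for an attack by `F`: consecutive atoms share a variable outside `F⁺`. -/
def AttackStep (q : Finset Atom) (F : Atom) (A B : Atom) : Prop :=
  ¬ ((atomVars A ∩ atomVars B : Finset ℕ) : Set ℕ) ⊆ plus q F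

/-- `F` attacks `G` in the attack graph of `q`. -/
def Attacks (q : Finset Atom) (F G : Atom) : Prop :=
  F ≠ G ∧ F ∈ q ∧ ∃ L : List Atom, (∀ A ∈ L, A ∈ q) ∧
    List.Chain (AttackStep q F) F L ∧ (F :: L).getLast (List.cons_ne_nil F L) = G

/-- `F` attacks the variable `z`. -/
def AttacksVar (q : Finset Atom) (F : Atom) (z : ℕ) : Prop :=
  z ∉ plus q F ∧ F ∈ q ∧ ∃ L : List Atom, (∀ A ∈ L, A ∈ q) ∧
    List.Chain (AttackStep q F) F L ∧ z ∈ atomVars ((F :: L).getLast (List.cons_ne_nil F L))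

/-- `r ⊨ ζ(q)` for a valuation `ζ` over the variable set `X`. -/
def Sat (r : Finset DBFact) (q : Finset Atom) (X : Finset ℕ) (ζ : ℕ → ℕ) : Prop :=
  ∃ θ : ℕ → ℕ, (∀ v ∈ X, θ v = ζ v) ∧ ∀ F ∈ q, applyVal θ F ∈ r

/-- `r ⊨ q`. -/
def Sat0 (r : Finset DBFact) (q : Finset Atom) : Prop :=
  ∃ θ : ℕ → ℕ, ∀ F ∈ q, applyVal θ F ∈ r

/-- A fact `A` is relevant for `q` in `r` if `A ∈ θ(q) ⊆ r` for some valuation `θ`. -/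
def Relevant (A : DBFact) (q : Finset Atom) (r : Finset DBFact) : Prop :=
  ∃ θ : ℕ → ℕ, (∃ F ∈ q, applyVal θ F = A) ∧ ∀ F ∈ q, applyVal θ F ∈ r

/-- Substitute the constant `a` for the variable `x` in a term. -/
def substTerm (x a : ℕ) (t : Term) : Term :=
  if t = Sum.inl x then Sum.inr a else t

/-- Substitute the constant `a` for the variable `x` in an atom. -/
def substAtom (x a : ℕ) (F : Atom) : Atom :=
  ⟨F.rel, F.key.map (substTerm x a), F.rest.map (substTerm x a)⟩

/-!
Substituting a constant for `x` only removes `x` from key and variable sets, and, by self-join-freeness,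
`q[x→a] \ {F'}` is the image of `q \ {F}`. An FD derivation over `q` survives when `x` is deleted
from every set (make the two valuations agree at `x`), so `F⁺ \ {x} ⊆ F'⁺`. Hence every attack step of
`q[x→a]` is one of `q`, attacks of `q[x→a]` lift to attacks of `q`, and so do cycles.
-/

open Function

lemma mem_termVars {l : List Term} {v : ℕ} : v ∈ termVars l ↔ Sum.inl v ∈ l := by
  simp [termVars, Sum.getLeft?_eq_some_iff]

lemma substTerm_eq_inl_iff {x a v : ℕ} {t : Term} :
    substTerm x a t = Sum.inl v ↔ t = Sum.inl v ∧ v ≠ x := by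
  unfold substTerm
  split_ifs with ht <;> aesop

lemma termVars_map_substTerm (x a : ℕ) (l : List Term) :
    termVars (l.map (substTerm x a)) = (termVars l).erase x := by
  ext v
  simp only [mem_termVars, Finset.mem_erase, List.mem_map, substTerm_eq_inl_iff]
  aesop

lemma keyVars_substAtom (x a : ℕ) (F : Atom) :
    keyVars (substAtom x a F) = (keyVars F).erase x := by
  simp [keyVars, substAtom, termVars_map_substTerm]

lemma atomVars_substAtom (x a : ℕ) (F : Atom) :
    atomVars (substAtom x a F) = (atomVars F).erase x := by
  simp [atomVars, substAtom, termVars_map_substTerm, Finset.erase_union_distrib]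

lemma SJF.injOn_substAtom {q : Finset Atom} (hq : SJF q) (x a : ℕ) :
    Set.InjOn (substAtom x a) q :=
  fun F hF G hG hFG => hq F hF G hG (congrArg Atom.rel hFG :)

lemma FDImplies.diff_singleton {fds fds' : Set (Set ℕ × Set ℕ)} {X Y : Set ℕ} {x : ℕ}
    (h : FDImplies fds X Y) (hfds : ∀ p ∈ fds, (p.1 \ {x}, p.2 \ {x}) ∈ fds') :
    FDImplies fds' (X \ {x}) (Y \ {x}) := by
  intro θ μ hθμ hX
  have agree_iff : ∀ S : Set ℕ,
      (∀ u ∈ S, update θ x (μ x) u = μ u) ↔ ∀ u ∈ S \ {x}, θ u = μ u := by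
    refine fun S => ⟨fun hS u hu => ?_, fun hS u hu => ?_⟩
    · simpa [update_of_ne hu.2] using hS u hu.1
    · by_cases hux : u = x
      · simp [hux]
      · simpa [update_of_ne hux] using hS u ⟨hu, hux⟩
  refine (agree_iff Y).1 (h _ μ (fun p hp hp1 => ?_) ((agree_iff X).2 hX))
  exact (agree_iff p.2).2 (hθμ _ (hfds p hp) ((agree_iff p.1).1 hp1))

lemma List.exists_map_eq_of_forall_mem_image {α β : Type*} {f : α → β} {s : Set α} :
    ∀ {l : List β}, (∀ b ∈ l, b ∈ f '' s) → ∃ l' : List α, (∀ a ∈ l', a ∈ s) ∧ l'.map f = l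
  | [], _ => ⟨[], by simp⟩
  | _ :: _, h => by
    obtain ⟨⟨a, ha, rfl⟩, hl⟩ := List.forall_mem_cons.1 h
    obtain ⟨l', hl's, rfl⟩ := exists_map_eq_of_forall_mem_image hl
    exact ⟨a :: l', List.forall_mem_cons.2 ⟨ha, hl's⟩, rfl⟩

section Substitution

variable {q : Finset Atom} {x a : ℕ}

lemma plus_substAtom (hinj : Set.InjOn (substAtom x a) q) {F : Atom} (hF : F ∈ q) {v : ℕ}
    (hv : v ∈ plus q F) (hvx : v ≠ x) :
    v ∈ plus (q.image (substAtom x a)) (substAtom x a F) := by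
  have hfds : ∀ p ∈ FDs (q.erase F), (p.1 \ {x}, p.2 \ {x}) ∈
      FDs ((q.image (substAtom x a)).erase (substAtom x a F)) := by
    rintro _ ⟨H, hH, rfl⟩
    obtain ⟨hHF, hHq⟩ := Finset.mem_erase.1 hH
    refine ⟨substAtom x a H,
      Finset.mem_erase.2 ⟨hinj.ne hHq hF hHF, Finset.mem_image_of_mem _ hHq⟩, ?_⟩
    simp [keyVars_substAtom, atomVars_substAtom]
  simpa [plus, keyVars_substAtom, Set.sdiff_singleton_eq_self, hvx.symm] using
    FDImplies.diff_singleton hv hfds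

lemma AttackStep.of_substAtom (hinj : Set.InjOn (substAtom x a) q) {F A B : Atom} (hF : F ∈ q)
    (h : AttackStep (q.image (substAtom x a)) (substAtom x a F) (substAtom x a A)
      (substAtom x a B)) :
    AttackStep q F A B := by
  refine fun hsub => h fun v hv => ?_
  rw [Finset.mem_coe, Finset.mem_inter, atomVars_substAtom, atomVars_substAtom, Finset.mem_erase,
    Finset.mem_erase] at hv
  exact plus_substAtom hinj hF (hsub (Finset.mem_inter_of_mem hv.1.2 hv.2.2)) hv.1.1

lemma Attacks.of_substAtom (hinj : Set.InjOn (substAtom x a) q) {F G : Atom} (hF : F ∈ q)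
    (hG : G ∈ q) (h : Attacks (q.image (substAtom x a)) (substAtom x a F) (substAtom x a G)) :
    Attacks q F G := by
  obtain ⟨hne, -, L', hL', hchain, hlast⟩ := h
  obtain ⟨L, hLq, rfl⟩ := List.exists_map_eq_of_forall_mem_image (s := (q : Set Atom))
    fun A' hA' => by simpa using hL' A' hA'
  have hFL : ∀ A ∈ F :: L, A ∈ q := List.forall_mem_cons.2 ⟨hF, hLq⟩
  refine ⟨fun hFG => hne (hFG ▸ rfl), hF, L, hLq, ?_, ?_⟩
  · exact ((List.isChain_cons_map _).1 hchain).imp fun A B hAB => hAB.of_substAtom hinj hF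
  · refine hinj (hFL _ (List.getLast_mem _)) hG ?_
    rw [← hlast]
    exact (List.getLast_map (f := substAtom x a) (l := F :: L) (by simp)).symm

lemma Attacks.mem_right {F G : Atom} (h : Attacks q F G) : G ∈ q := by
  obtain ⟨-, hF, L, hL, -, rfl⟩ := h
  exact List.forall_mem_cons.2 ⟨hF, hL⟩ _ (List.getLast_mem _)

end Substitution

/-- If the attack graph of `q` is acyclic, then the attack graph of `q[x→a]` is acyclic. -/
theorem subst_preserves_acyclicity (q : Finset Atom) (hq : SJF q) (x a : ℕ)
    (h : ∀ F, ¬ Relation.TransGen (Attacks q) F F) :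
    ∀ F, ¬ Relation.TransGen (Attacks (q.image (substAtom x a))) F F := by
  intro F' hcycle
  have : Nonempty Atom := ⟨F'⟩
  let lift := invFunOn (substAtom x a) q
  have lift_spec : ∀ A' ∈ q.image (substAtom x a), lift A' ∈ q ∧ substAtom x a (lift A') = A' :=
    fun A' hA' => have hA'' : ∃ A ∈ (q : Set Atom), substAtom x a A = A' := by simpa using hA'
      ⟨invFunOn_mem hA'', invFunOn_eq hA''⟩
  have lift_attacks : ∀ A' B', Attacks (q.image (substAtom x a)) A' B' →
      Attacks q (lift A') (lift B') := by
    intro A' B' hAB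
    obtain ⟨hA, hsA⟩ := lift_spec A' hAB.2.1
    obtain ⟨hB, hsB⟩ := lift_spec B' hAB.mem_right
    exact .of_substAtom (hq.injOn_substAtom x a) hA hB (by rwa [hsA, hsB])
  exact h (lift F') (Relation.TransGen.lift lift lift_attacks F' F' hcycle)
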